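/- arXiv:2402.16469 — 2 statements merged into one kernel-verified Lean document; each statement's English description precedes it below -/
import Mathlib

section
/- Let x = x₄ b₄ a^{k₃} x₅ b₁ a^{k₁} be a string of length m, where x₄, x₅ ∈ Σ*, a, b₁, b₄ ∈ Σ with b₁ ≠ a and b₄ ≠ a, and k₁, k₃ ≥ 1 are integers with k₃ ≥ k₁. Let ℓ₃ = |x₄ b₄| and e = ℓ₃ + k₁ - 1. Then for every position i with ℓ₃ ≤ i < e, suff[i] = i - ℓ₃ + 1. -/
/-!
With `d = i - ℓ₃ + 1`, the prefix `x[0..i]` ends in `b₄ a^d` (as `d ≤ k₁ - 1 < k₃`), while `x`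
ends in `a^{d+1}` (as `d + 1 ≤ k₁`). The common suffix `a^d` therefore cannot be extended:
extending it would compare `b₄` with `a`.
-/

/-- `suffT x i` is the length of the longest common suffix of `x` and `x[0..i]`,
i.e. the largest `k` with `0 ≤ k ≤ i+1` such that `x[i-k+1..i] = x[m-k..m-1]`. -/
def suffT {α : Type*} [DecidableEq α] (x : List α) (i : ℕ) : ℕ :=
  Nat.findGreatest
    (fun k => (x.take (i + 1)).drop (i + 1 - k) = x.drop (x.length - k)) (i + 1)

/-- `Cond-suf(i,d)`: either `0 < d ≤ i+1` and `x[i-d+1..m-d-1]` is a suffix of `x`,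
or `i+1 < d` and `x[0..m-d-1]` is a suffix of `x`. -/
def CondSuf {α : Type*} (x : List α) (i d : ℕ) : Prop :=
  (0 < d ∧ d ≤ i + 1 ∧ (x.drop (i + 1 - d)).take (x.length - 1 - i) <:+ x) ∨
  (i + 1 < d ∧ x.take (x.length - d) <:+ x)

/-- `Cond-occ(i,d)`: either `0 < d ≤ i` and `x[i-d] ≠ x[i]`, or `i < d`. -/
def CondOcc {α : Type*} (x : List α) (i d : ℕ) : Prop :=
  (0 < d ∧ d ≤ i ∧ x[i - d]? ≠ x[i]?) ∨ i < d

/-- `goodSuff x i = min { d | Cond-suf(i,d) and Cond-occ(i,d) }`. -/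
noncomputable def goodSuff {α : Type*} (x : List α) (i : ℕ) : ℕ :=
  sInf {d | CondSuf x i d ∧ CondOcc x i d}

namespace List

variable {α : Type*}

theorem rtake_eq_rtake_of_le {l l' : List α} {j k : ℕ} (h : l.rtake k = l'.rtake k) (hjk : j ≤ k) :
    l.rtake j = l'.rtake j := by
  have := congrArg (fun s => (s.reverse.take j).reverse) h
  simpa only [rtake_eq_reverse_take_reverse, reverse_reverse, take_take, min_eq_left hjk]
    using this

theorem IsSuffix.rtake_length_eq {s l : List α} (h : s <:+ l) : l.rtake s.length = s :=
  (suffix_iff_eq_drop.mp h).symm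

end List

section Suff

variable {α : Type*} [DecidableEq α]

theorem suffT_eq_findGreatest_rtake {x : List α} {i : ℕ} (hi : i < x.length) :
    suffT x i = Nat.findGreatest (fun k => (x.take (i + 1)).rtake k = x.rtake k) (i + 1) := by
  have hlen : (x.take (i + 1)).length = i + 1 := List.length_take_of_le hi
  simp only [suffT, List.rtake, hlen]

theorem suffT_eq_length_of_suffix_ne {x w : List α} {b c : α} {i : ℕ}
    (hpre : b :: w <:+ x.take (i + 1)) (hsuf : c :: w <:+ x) (hbc : b ≠ c) :
    suffT x i = w.length := by
  -- otherwise `b :: w` and `c :: w` would be suffixes of `x` of equal length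
  have hi : i < x.length := by
    by_contra! hxi
    rw [List.take_of_length_le (by omega)] at hpre
    exact hbc (List.cons.inj ((List.suffix_iff_eq_drop.mp hpre).trans
      (List.suffix_iff_eq_drop.mp hsuf).symm)).1
  rw [suffT_eq_findGreatest_rtake hi, Nat.findGreatest_eq_iff]
  have hw : w.length + 1 ≤ i + 1 := by simpa using hpre.length_le.trans (List.length_take_le _ _)
  refine ⟨by omega, fun _ => ?_, fun n hwn _ hn => ?_⟩
  · exact ((List.suffix_cons b w).trans hpre).rtake_length_eq.trans
      ((List.suffix_cons c w).trans hsuf).rtake_length_eq.symm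
  · have h := List.rtake_eq_rtake_of_le hn (Nat.succ_le_of_lt hwn)
    have hb := hpre.rtake_length_eq
    have hc := hsuf.rtake_length_eq
    rw [List.length_cons] at hb hc
    rw [hb, hc] at h
    exact hbc (List.cons.inj h).1

end Suff

theorem statement7_general {α : Type*} [DecidableEq α] (x₄ x₅ : List α) (a b₁ b₄ : α) (k₁ k₃ : ℕ)
    (hb₄ : b₄ ≠ a) (hkk : k₃ ≥ k₁)
    (x : List α)
    (hx : x = x₄ ++ [b₄] ++ List.replicate k₃ a ++ x₅ ++ [b₁] ++ List.replicate k₁ a)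
    (i : ℕ) (hℓ : x₄.length + 1 ≤ i) (he : i < (x₄.length + 1) + k₁ - 1) :
    suffT x i = i - (x₄.length + 1) + 1 := by
  set d := i - (x₄.length + 1) + 1
  have htake : x.take (i + 1) = x₄ ++ b₄ :: List.replicate d a := by
    have hx' : x = x₄ ++ [b₄] ++ (List.replicate k₃ a ++ (x₅ ++ [b₁] ++ List.replicate k₁ a)) := by
      simp only [hx, List.append_assoc]
    rw [hx', show i + 1 = (x₄ ++ [b₄]).length + d by simp; omega, List.take_length_add_append,
      List.take_append_of_le_length (by simp; omega), List.take_replicate,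
      min_eq_left (by omega), List.append_assoc, List.singleton_append]
  have hsuf : a :: List.replicate d a <:+ x := by
    rw [hx, ← List.replicate_succ]
    exact (List.suffix_replicate_iff.mpr ⟨by simp; omega, by simp⟩).trans (List.suffix_append _ _)
  simpa using suffT_eq_length_of_suffix_ne (htake ▸ List.suffix_append _ _) hsuf hb₄

/-- Let `x = x₄ b₄ a^{k₃} x₅ b₁ a^{k₁}` with `b₁ ≠ a`, `b₄ ≠ a`,
`k₁, k₃ ≥ 1`, `k₃ ≥ k₁`. Let `ℓ₃ = |x₄ b₄|` and `e = ℓ₃ + k₁ - 1`.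
Then for every position `i` with `ℓ₃ ≤ i < e`, `suff[i] = i - ℓ₃ + 1`. -/
theorem statement7 {α : Type*} [DecidableEq α] (x₄ x₅ : List α) (a b₁ b₄ : α) (k₁ k₃ : ℕ)
    (hb₁ : b₁ ≠ a) (hb₄ : b₄ ≠ a) (hk₁ : 1 ≤ k₁) (hk₃ : 1 ≤ k₃) (hkk : k₃ ≥ k₁)
    (x : List α)
    (hx : x = x₄ ++ [b₄] ++ List.replicate k₃ a ++ x₅ ++ [b₁] ++ List.replicate k₁ a)
    (i : ℕ) (hℓ : x₄.length + 1 ≤ i) (he : i < (x₄.length + 1) + k₁ - 1) :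
    suffT x i = i - (x₄.length + 1) + 1 :=
  statement7_general x₄ x₅ a b₁ b₄ k₁ k₃ hb₄ hkk x hx i hℓ he
end

section
/- Let x = u v u be a string of length m, where u, v ∈ Σ* and u is a border of x (i.e., u is both a proper prefix and a suffix of x). Then for every position i with 0 ≤ i < |u| such that suff[i] ≤ i, it holds that good-suff[m-1-suff[i]] < m-1-i. -/
section suffT

variable {α : Type*} [DecidableEq α] {x : List α} {i : ℕ}

theorem suffT_le_succ : suffT x i ≤ i + 1 := Nat.findGreatest_le _

theorem take_drop_suffT :
    (x.take (i + 1)).drop (i + 1 - suffT x i) = x.drop (x.length - suffT x i) :=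
  Nat.findGreatest_spec (P := fun k => (x.take (i + 1)).drop (i + 1 - k) = x.drop (x.length - k))
    (Nat.zero_le _) (by simp)

theorem suffT_eq_succ_of_take_suffix (h : x.take (i + 1) <:+ x) (hi : i < x.length) :
    suffT x i = i + 1 := by
  refine le_antisymm suffT_le_succ (Nat.le_findGreatest le_rfl ?_)
  rw [Nat.sub_self, List.drop_zero, List.suffix_iff_eq_drop.mp h, List.length_take_of_le hi]

theorem getElem?_sub_suffT_ne (hi : i < x.length) (hs : suffT x i ≤ i) :
    x[i - suffT x i]? ≠ x[x.length - 1 - suffT x i]? := by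
  set s := suffT x i
  intro heq
  refine Nat.findGreatest_is_greatest (Nat.lt_succ_self s) (by omega : s + 1 ≤ i + 1) ?_
  show (x.take (i + 1)).drop (i + 1 - (s + 1)) = x.drop (x.length - (s + 1))
  have hlen : (x.take (i + 1)).length = i + 1 := List.length_take_of_le hi
  rw [List.drop_eq_getElem_cons (l := x.take (i + 1)) (by omega),
    List.drop_eq_getElem_cons (l := x) (by omega), show i + 1 - (s + 1) + 1 = i + 1 - s by omega,
    show x.length - (s + 1) + 1 = x.length - s by omega, take_drop_suffT, List.getElem_take]
  congr 1
  rw [List.getElem?_eq_getElem (by omega), List.getElem?_eq_getElem (by omega)] at heq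
  simpa only [Option.some_inj, show i + 1 - (s + 1) = i - s by omega,
    show x.length - (s + 1) = x.length - 1 - s by omega] using heq

theorem goodSuff_le_of_period (p : ℕ)
    (hper : (x.drop p).take (i + 1) = x.take (i + 1)) (hs : suffT x i ≤ i)
    (hpi : p + i + 1 < x.length) :
    goodSuff x (x.length - 1 - suffT x i) ≤ x.length - 1 - p - i := by
  set s := suffT x i
  have hcs : CondSuf x (x.length - 1 - s) (x.length - 1 - p - i) := by
    refine Or.inl ⟨by omega, by omega, ?_⟩
    have hwindow : (x.drop (p + (i + 1 - s))).take s = x.drop (x.length - s) := by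
      calc (x.drop (p + (i + 1 - s))).take s
          = ((x.drop p).take (i + 1)).drop (i + 1 - s) := by
            rw [List.drop_take, List.drop_drop, Nat.sub_sub_self suffT_le_succ]
        _ = x.drop (x.length - s) := by rw [hper, take_drop_suffT]
    rw [show x.length - 1 - s + 1 - (x.length - 1 - p - i) = p + (i + 1 - s) by omega,
      show x.length - 1 - (x.length - 1 - s) = s by omega, hwindow]
    exact List.drop_suffix _ _
  have hco : CondOcc x (x.length - 1 - s) (x.length - 1 - p - i) := by
    refine Or.inl ⟨by omega, by omega, ?_⟩
    rw [show x.length - 1 - s - (x.length - 1 - p - i) = p + (i - s) by omega,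
      ← List.getElem?_drop, ← List.getElem?_take_of_lt (j := i + 1) (by omega), hper,
      List.getElem?_take_of_lt (by omega)]
    exact getElem?_sub_suffT_ne (by omega) hs
  exact Nat.sInf_le ⟨hcs, hco⟩

end suffT

theorem statement11_general {α : Type*} [DecidableEq α] (u v : List α)
    (x : List α) (hx : x = u ++ v ++ u)
    (i : ℕ) (hi : i < u.length) (hs : suffT x i ≤ i) :
    goodSuff x (x.length - 1 - suffT x i) < x.length - 1 - i := by
  subst hx
  have hper : ((u ++ v ++ u).drop (u ++ v).length).take (i + 1) = (u ++ v ++ u).take (i + 1) := by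
    rw [List.drop_left, List.append_assoc, List.take_append_of_le_length hi]
  have hiu : i + 1 < u.length := by
    refine lt_of_le_of_ne hi fun hu => ?_
    have hprefix : (u ++ v ++ u).take (i + 1) = u := by
      rw [List.append_assoc, List.take_append_of_le_length hu.le, hu, List.take_length]
    have hsuffix : (u ++ v ++ u).take (i + 1) <:+ u ++ v ++ u := by
      rw [hprefix]; exact List.suffix_append _ _
    have hfull := suffT_eq_succ_of_take_suffix hsuffix (by simp only [List.length_append]; omega)
    omega
  have hle := goodSuff_le_of_period _ hper hs (by simp only [List.length_append]; omega)
  simp only [List.length_append] at hle ⊢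
  omega

/-- Let `x = u v u` where `u` is a border of `x` (`u ≠ x`).
Then for every position `i` with `0 ≤ i < |u|` such that `suff[i] ≤ i`,
`good-suff[m-1-suff[i]] < m-1-i`. -/
theorem statement11 {α : Type*} [DecidableEq α] (u v : List α)
    (x : List α) (hx : x = u ++ v ++ u) (hborder : u ≠ x)
    (i : ℕ) (hi : i < u.length) (hs : suffT x i ≤ i) :
    goodSuff x (x.length - 1 - suffT x i) < x.length - 1 - i :=
  statement11_general u v x hx i hi hs
end
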